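/- arXiv:1512.08655 — 2 statements merged into one kernel-verified Lean document; each statement's English description precedes it below -/
import Mathlib

section
/- Let a triangle with vertices A, B, C in R^2 be subdivided by an interior point P into the three triangles PAB, PBC, PCA. Then the weighted sum of circumcenters, Area(PAB)·O(PAB) + Area(PBC)·O(PBC) + Area(PCA)·O(PCA), equals Area(ABC)·O(ABC), where O(·) denotes the circumcenter of a nondegenerate triangle. -/
/-!
Twice the signed area of a triangle `xyz` is the shoelace sum `w x y + w y z + w z x` of the
antisymmetric wedge `w`, and solving the two linear equations for the circumcenter shows that
this sum times the circumcenter is likewise a cyclic sum `m x y + m y z + m z x` of an antisymmetric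
edge term `m`. Cyclic sums of antisymmetric functions add up under subdivision by a point, since
each interior edge is traversed once in each direction; this gives the signed identity for any `P`.
For `P` in the triangle, the three signed areas are the barycentric coordinates of `P` times the
signed area of `ABC`, so they all have its sign; and by the determinant formula for the Lebesgue
measure of a linear image, the area of a triangle is a fixed multiple of the absolute value of its signed area.
-/

open MeasureTheory Set

theorem Measure.addHaar_image_affineMap {E : Type*} [NormedAddCommGroup E] [NormedSpace ℝ E]
    [MeasurableSpace E] [BorelSpace E] [FiniteDimensional ℝ E] (μ : Measure E)
    [μ.IsAddHaarMeasure] (f : E →ᵃ[ℝ] E) (s : Set E) :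
    μ (f '' s) = ENNReal.ofReal |LinearMap.det f.linear| * μ s := by
  have himage : f '' s = (· + f 0) '' (f.linear '' s) := by
    rw [image_image]
    exact image_congr fun x _ => congrFun f.decomp x
  rw [himage, image_add_right, measure_preimage_add_right, Measure.addHaar_image_linearMap]

theorem exists_eq_combination_of_mem_convexHull_triple {E : Type*} [AddCommGroup E]
    [Module ℝ E] {a b c x : E} (hx : x ∈ convexHull ℝ {a, b, c}) :
    ∃ α β γ : ℝ, 0 ≤ α ∧ 0 ≤ β ∧ 0 ≤ γ ∧ α + β + γ = 1 ∧ x = α • a + β • b + γ • c := by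
  rw [convexHull_insert (insert_nonempty b {c}), convexHull_pair, mem_convexJoin] at hx
  obtain ⟨_, rfl, _, ⟨u, v, hu, hv, huv, rfl⟩, s, t, hs, ht, hst, rfl⟩ := hx
  refine ⟨s, t * u, t * v, hs, mul_nonneg ht hu, mul_nonneg ht hv, ?_, ?_⟩
  · linear_combination hst + t * huv
  · module

theorem abs_smul_eq_abs_smul_of_smul_eq {M : Type*} [AddCommGroup M] [Module ℝ M] {a : ℝ}
    {x y : M} (h : a • x = a • y) : |a| • x = |a| • y := by
  rcases abs_choice a with ha | ha <;> simp [ha, h]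

section TriangleSum

variable {α M : Type*} [AddCommGroup M]

def triangleSum (f : α → α → M) (x y z : α) : M := f x y + f y z + f z x

theorem triangleSum_subdivision {f : α → α → M} (hf : ∀ x y, f y x = -f x y) (p a b c : α) :
    triangleSum f p a b + triangleSum f p b c + triangleSum f p c a = triangleSum f a b c := by
  simp only [triangleSum, hf b p, hf c p, hf a p]
  abel

end TriangleSum

local notation "ℝ²" => EuclideanSpace ℝ (Fin 2)

namespace EuclideanPlane

def wedge (u v : ℝ²) : ℝ := u 0 * v 1 - u 1 * v 0

theorem triangleSum_wedge (x y z : ℝ²) : triangleSum wedge x y z = wedge (y - x) (z - x) := by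
  simp only [triangleSum, wedge, PiLp.sub_apply]
  ring

theorem triangleSum_wedge_of_eq_combination {a b c p : ℝ²} {α β γ : ℝ} (hsum : α + β + γ = 1)
    (hp : p = α • a + β • b + γ • c) :
    triangleSum wedge p a b = γ * triangleSum wedge a b c ∧
      triangleSum wedge p b c = α * triangleSum wedge a b c ∧
      triangleSum wedge p c a = β * triangleSum wedge a b c := by
  obtain rfl : α = 1 - β - γ := by linarith
  subst hp
  simp only [triangleSum, wedge, PiLp.add_apply, PiLp.smul_apply, smul_eq_mul]
  refine ⟨?_, ?_, ?_⟩ <;> ring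

/-- The area of the reference triangle is `1 / 2`, but the theorem is homogeneous in areas, so
this value is never needed. -/
theorem volume_convexHull_triple (x y z : ℝ²) :
    (volume (convexHull ℝ {x, y, z})).toReal = |triangleSum wedge x y z| *
      (volume (convexHull ℝ {0, EuclideanSpace.single 0 1, EuclideanSpace.single 1 1} :
        Set ℝ²)).toReal := by
  let L : ℝ² →ₗ[ℝ] ℝ² := Matrix.toEuclideanLin !![y 0 - x 0, z 0 - x 0; y 1 - x 1, z 1 - x 1]
  let f : ℝ² →ᵃ[ℝ] ℝ² := L.toAffineMap + AffineMap.const ℝ ℝ² x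
  have hf : f '' {0, EuclideanSpace.single 0 1, EuclideanSpace.single 1 1} = {x, y, z} := by
    have h₀ : f 0 = x := by simp [f]
    have h₁ : f (EuclideanSpace.single 0 1) = y := by
      ext i; fin_cases i <;> simp [f, L]
    have h₂ : f (EuclideanSpace.single 1 1) = z := by
      ext i; fin_cases i <;> simp [f, L]
    rw [image_insert_eq, image_insert_eq, image_singleton, h₀, h₁, h₂]
  have hdet : LinearMap.det f.linear = triangleSum wedge x y z := by
    simp only [f, L, AffineMap.add_linear, AffineMap.const_linear, add_zero,
      LinearMap.toAffineMap_linear, LinearMap.det_toLpLin, Matrix.det_fin_two_of,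
      triangleSum_wedge, wedge, PiLp.sub_apply]
    ring
  rw [← hf, ← f.image_convexHull, Measure.addHaar_image_affineMap, hdet, ENNReal.toReal_mul,
    ENNReal.toReal_ofReal (abs_nonneg _)]

theorem dist_sq_eq (x y : ℝ²) : dist x y ^ 2 = (x 0 - y 0) ^ 2 + (x 1 - y 1) ^ 2 := by
  rw [EuclideanSpace.dist_eq, Real.sq_sqrt (by positivity), Fin.sum_univ_two, Real.dist_eq,
    Real.dist_eq, sq_abs, sq_abs]

noncomputable def circumMoment (x y : ℝ²) : ℝ² :=
  (2⁻¹ : ℝ) • !₂[(x 0 ^ 2 + x 1 ^ 2) * y 1 - (y 0 ^ 2 + y 1 ^ 2) * x 1,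
    (y 0 ^ 2 + y 1 ^ 2) * x 0 - (x 0 ^ 2 + x 1 ^ 2) * y 0]

theorem circumMoment_swap (x y : ℝ²) : circumMoment y x = -circumMoment x y := by
  ext i; fin_cases i <;> simp [circumMoment] <;> ring

theorem triangleSum_wedge_smul_of_equidistant {o x y z : ℝ²}
    (h : dist o x = dist o y ∧ dist o y = dist o z) :
    triangleSum wedge x y z • o = triangleSum circumMoment x y z := by
  have hxy := congrArg (· ^ 2) h.1
  have hyz := congrArg (· ^ 2) h.2
  simp only [dist_sq_eq] at hxy hyz
  ext i; fin_cases i <;>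
    simp only [triangleSum, wedge, circumMoment, PiLp.add_apply, PiLp.smul_apply, smul_eq_mul,
      Fin.zero_eta, Fin.mk_one, Matrix.cons_val_zero, Matrix.cons_val_one, Matrix.cons_val_fin_one]
  · linear_combination (z 1 - y 1) / 2 * hxy + (x 1 - y 1) / 2 * hyz
  · linear_combination (y 0 - z 0) / 2 * hxy + (y 0 - x 0) / 2 * hyz

theorem triangleSum_wedge_smul_circumcenter_subdivision {a b c p o₀ o₁ o₂ o₃ : ℝ²}
    (h₀ : dist o₀ a = dist o₀ b ∧ dist o₀ b = dist o₀ c)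
    (h₁ : dist o₁ p = dist o₁ a ∧ dist o₁ a = dist o₁ b)
    (h₂ : dist o₂ p = dist o₂ b ∧ dist o₂ b = dist o₂ c)
    (h₃ : dist o₃ p = dist o₃ c ∧ dist o₃ c = dist o₃ a) :
    triangleSum wedge p a b • o₁ + triangleSum wedge p b c • o₂ + triangleSum wedge p c a • o₃ =
      triangleSum wedge a b c • o₀ := by
  rw [triangleSum_wedge_smul_of_equidistant h₀, triangleSum_wedge_smul_of_equidistant h₁,
    triangleSum_wedge_smul_of_equidistant h₂, triangleSum_wedge_smul_of_equidistant h₃,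
    triangleSum_subdivision circumMoment_swap]

end EuclideanPlane

open EuclideanPlane in
theorem circumcenter_of_mass_triangle_subdivision_general
    (A B C P : EuclideanSpace ℝ (Fin 2))
    (hP : P ∈ interior (convexHull ℝ {A, B, C}))
    (O₀ O₁ O₂ O₃ : EuclideanSpace ℝ (Fin 2))
    (hO₀ : dist O₀ A = dist O₀ B ∧ dist O₀ B = dist O₀ C)
    (hO₁ : dist O₁ P = dist O₁ A ∧ dist O₁ A = dist O₁ B)
    (hO₂ : dist O₂ P = dist O₂ B ∧ dist O₂ B = dist O₂ C)
    (hO₃ : dist O₃ P = dist O₃ C ∧ dist O₃ C = dist O₃ A) :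
    (volume (convexHull ℝ {P, A, B})).toReal • O₁ +
      (volume (convexHull ℝ {P, B, C})).toReal • O₂ +
      (volume (convexHull ℝ {P, C, A})).toReal • O₃ =
      (volume (convexHull ℝ {A, B, C})).toReal • O₀ := by
  obtain ⟨α, β, γ, hα, hβ, hγ, hsum, hPeq⟩ :=
    exists_eq_combination_of_mem_convexHull_triple (interior_subset hP)
  obtain ⟨hσ₁, hσ₂, hσ₃⟩ := triangleSum_wedge_of_eq_combination hsum hPeq
  have hsigned := triangleSum_wedge_smul_circumcenter_subdivision hO₀ hO₁ hO₂ hO₃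
  rw [hσ₁, hσ₂, hσ₃] at hsigned
  have habs : |triangleSum wedge A B C| • (γ • O₁ + α • O₂ + β • O₃) =
      |triangleSum wedge A B C| • O₀ :=
    abs_smul_eq_abs_smul_of_smul_eq (by rw [← hsigned]; module)
  rw [volume_convexHull_triple P A B, volume_convexHull_triple P B C,
    volume_convexHull_triple P C A, volume_convexHull_triple A B C, hσ₁, hσ₂, hσ₃, abs_mul,
    abs_mul, abs_mul, abs_of_nonneg hα, abs_of_nonneg hβ, abs_of_nonneg hγ]
  linear_combination (norm := module) (volume (convexHull ℝ
    {0, EuclideanSpace.single 0 1, EuclideanSpace.single 1 1} : Set ℝ²)).toReal • habs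

/-- Subdividing a triangle `ABC` by an interior point `P` into `PAB`, `PBC`, `PCA`:
the area-weighted sum of circumcenters of the three small triangles equals
`Area(ABC) • O(ABC)`. -/
theorem circumcenter_of_mass_triangle_subdivision
    (A B C P : EuclideanSpace ℝ (Fin 2))
    (hP : P ∈ interior (convexHull ℝ {A, B, C}))
    (hABC : AffineIndependent ℝ ![A, B, C])
    (hPAB : AffineIndependent ℝ ![P, A, B])
    (hPBC : AffineIndependent ℝ ![P, B, C])
    (hPCA : AffineIndependent ℝ ![P, C, A])
    (O₀ O₁ O₂ O₃ : EuclideanSpace ℝ (Fin 2))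
    (hO₀ : dist O₀ A = dist O₀ B ∧ dist O₀ B = dist O₀ C)
    (hO₁ : dist O₁ P = dist O₁ A ∧ dist O₁ A = dist O₁ B)
    (hO₂ : dist O₂ P = dist O₂ B ∧ dist O₂ B = dist O₂ C)
    (hO₃ : dist O₃ P = dist O₃ C ∧ dist O₃ C = dist O₃ A) :
    (volume (convexHull ℝ {P, A, B})).toReal • O₁ +
      (volume (convexHull ℝ {P, B, C})).toReal • O₂ +
      (volume (convexHull ℝ {P, C, A})).toReal • O₃ =
      (volume (convexHull ℝ {A, B, C})).toReal • O₀ :=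
  circumcenter_of_mass_triangle_subdivision_general A B C P hP O₀ O₁ O₂ O₃ hO₀ hO₁ hO₂ hO₃
end

section
/- Let a tetrahedron with vertices A, B, C, D in R^3 be subdivided by an interior point P into the four tetrahedra PABC, PABD, PACD, PBCD (all nondegenerate). Then Σ Vol(T_i)·O(T_i) over these four tetrahedra equals Vol(ABCD)·O(ABCD), where O denotes the circumcenter. -/
/-!
Write `tetraDet a b c d = det (b - a, c - a, d - a)`, six times the signed volume of `abcd`.
Cramer's rule applied to the linear conditions `2⟪o - a, x - a⟫ = ‖x - a‖²` (`x = b, c, d`)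
gives `tetraDet a b c d • o = F a b c d` for a polynomial expression `F` in the vertices, and a
polynomial identity shows that `F`, like the signed volume, is a cocycle:
`F A B C D = F P B C D - F P A C D + F P A B D - F P A B C`.
Since the interior point `P` has positive barycentric weights, the four signed volumes in this
relation all have the sign of `tetraDet A B C D`, so multiplying by that sign turns each term
`± F` into `Vol • O`, and the cocycle relation into the theorem.
-/

open scoped Pointwise
open MeasureTheory Matrix RealInnerProductSpace Module

local notation "ℝ³" => EuclideanSpace ℝ (Fin 3)

namespace CircumcenterOfMass

theorem addHaar_convexHull_tetrahedron {G : Type*} [NormedAddCommGroup G] [NormedSpace ℝ G]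
    [MeasurableSpace G] [BorelSpace G] [FiniteDimensional ℝ G] (μ : Measure G)
    [μ.IsAddHaarMeasure] (e : Basis (Fin 3) ℝ G) (a b c d : G) :
    μ (convexHull ℝ {a, b, c, d}) =
      ENNReal.ofReal |e.det ![b - a, c - a, d - a]| * μ (convexHull ℝ {0, e 0, e 1, e 2}) := by
  set L := e.constr ℕ ![b - a, c - a, d - a]
  have hL : LinearMap.det L = e.det ![b - a, c - a, d - a] := by
    rw [← LinearMap.det_toMatrix e, ← e.toMatrix_eq_toMatrix_constr, e.det_apply]
  have hull : convexHull ℝ {a, b, c, d} = a +ᵥ L '' convexHull ℝ {0, e 0, e 1, e 2} := by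
    rw [LinearMap.image_convexHull, ← convexHull_vadd]
    simp [L, Set.image_insert_eq, Set.vadd_set_insert]
  rw [hull, measure_vadd, Measure.addHaar_image_linearMap, hL]

theorem two_inner_sub_eq_norm_sq {V : Type*} [NormedAddCommGroup V] [InnerProductSpace ℝ V]
    {o a b : V} (h : dist o a = dist o b) : 2 * ⟪o - a, b - a⟫ = ‖b - a‖ ^ 2 := by
  have := norm_sub_sq_real (o - a) (b - a)
  rw [sub_sub_sub_cancel_right, ← dist_eq_norm, ← dist_eq_norm, h] at this
  linarith

noncomputable section

def det3 (u v w : ℝ³) : ℝ := (EuclideanSpace.basisFun (Fin 3) ℝ).toBasis.det ![u, v, w]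

def cross (u v : ℝ³) : ℝ³ := WithLp.toLp 2 (u.ofLp ⨯₃ v.ofLp)

lemma det3_eq_coords (u v w : ℝ³) : det3 u v w =
    u 0 * (v 1 * w 2 - v 2 * w 1) - u 1 * (v 0 * w 2 - v 2 * w 0) +
      u 2 * (v 0 * w 1 - v 1 * w 0) := by
  rw [det3, Basis.det_apply, Matrix.det_fin_three]
  simp only [Basis.toMatrix_apply, OrthonormalBasis.coe_toBasis_repr_apply,
    EuclideanSpace.basisFun_repr, Fin.isValue, cons_val_zero, cons_val_one, cons_val]
  ring

lemma cross_eq_coords (u v : ℝ³) : cross u v =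
    WithLp.toLp 2 ![u 1 * v 2 - u 2 * v 1, u 2 * v 0 - u 0 * v 2, u 0 * v 1 - u 1 * v 0] := by
  simp [cross, cross_apply]

lemma inner_eq_coords (u v : ℝ³) : ⟪u, v⟫ = u 0 * v 0 + u 1 * v 1 + u 2 * v 2 := by
  simp only [PiLp.inner_apply, RCLike.inner_apply, Real.ringHom_apply, Fin.sum_univ_three]
  ring

lemma norm_sq_eq_coords (u : ℝ³) : ‖u‖ ^ 2 = u 0 ^ 2 + u 1 ^ 2 + u 2 ^ 2 := by
  simp [EuclideanSpace.norm_sq_eq, Fin.sum_univ_three]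

lemma det3_smul_eq_sum_inner_smul_cross (u v w x : ℝ³) :
    det3 u v w • x = ⟪x, u⟫ • cross v w + ⟪x, v⟫ • cross w u + ⟪x, w⟫ • cross u v := by
  ext i
  fin_cases i <;>
  · simp only [det3_eq_coords, inner_eq_coords, cross_eq_coords, Fin.isValue, Fin.zero_eta,
      Fin.mk_one, Fin.reduceFinMk, PiLp.add_apply, PiLp.smul_apply, smul_eq_mul, cons_val_zero,
      cons_val_one, cons_val]
    ring

def tetraDet (a b c d : ℝ³) : ℝ := det3 (b - a) (c - a) (d - a)

def circumNumerator (a b c d : ℝ³) : ℝ³ :=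
  tetraDet a b c d • a + (1 / 2 : ℝ) • (‖b - a‖ ^ 2 • cross (c - a) (d - a) +
    ‖c - a‖ ^ 2 • cross (d - a) (b - a) + ‖d - a‖ ^ 2 • cross (b - a) (c - a))

theorem tetraDet_smul_eq_circumNumerator {a b c d o : ℝ³}
    (h : dist o a = dist o b ∧ dist o b = dist o c ∧ dist o c = dist o d) :
    tetraDet a b c d • o = circumNumerator a b c d := by
  obtain ⟨hab, hbc, hcd⟩ := h
  have hb := two_inner_sub_eq_norm_sq hab
  have hc := two_inner_sub_eq_norm_sq (hab.trans hbc)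
  have hd := two_inner_sub_eq_norm_sq (hab.trans (hbc.trans hcd))
  have key := det3_smul_eq_sum_inner_smul_cross (b - a) (c - a) (d - a) (o - a)
  rw [circumNumerator, tetraDet]
  linear_combination (norm := module) key + (hb / 2) • cross (c - a) (d - a) +
    (hc / 2) • cross (d - a) (b - a) + (hd / 2) • cross (b - a) (c - a)

theorem circumNumerator_cocycle (p a b c d : ℝ³) :
    circumNumerator a b c d = circumNumerator p b c d - circumNumerator p a c d +
      circumNumerator p a b d - circumNumerator p a b c := by
  ext i
  fin_cases i <;>
  · simp only [circumNumerator, tetraDet, det3_eq_coords, cross_eq_coords, norm_sq_eq_coords,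
      Fin.isValue, Fin.zero_eta, Fin.mk_one, Fin.reduceFinMk, PiLp.add_apply, PiLp.sub_apply,
      PiLp.smul_apply, smul_eq_mul, smul_add, cons_val_zero, cons_val_one, cons_val]
    ring

/-- Its value `1 / 6` plays no role. -/
def stdTetraVolume : ℝ :=
  (volume (convexHull ℝ {0, EuclideanSpace.basisFun (Fin 3) ℝ 0,
    EuclideanSpace.basisFun (Fin 3) ℝ 1, EuclideanSpace.basisFun (Fin 3) ℝ 2} : Set ℝ³)).toReal

theorem volume_convexHull_tetrahedron (a b c d : ℝ³) :
    (volume (convexHull ℝ {a, b, c, d})).toReal = |tetraDet a b c d| * stdTetraVolume := by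
  rw [addHaar_convexHull_tetrahedron volume (EuclideanSpace.basisFun (Fin 3) ℝ).toBasis,
    ENNReal.toReal_mul, ENNReal.toReal_ofReal (abs_nonneg _)]
  rfl

theorem volume_smul_circumcenter {a b c d o : ℝ³}
    (h : dist o a = dist o b ∧ dist o b = dist o c ∧ dist o c = dist o d) :
    (volume (convexHull ℝ {a, b, c, d})).toReal • o =
      (stdTetraVolume * SignType.sign (tetraDet a b c d)) • circumNumerator a b c d := by
  rw [← tetraDet_smul_eq_circumNumerator h, smul_smul, volume_convexHull_tetrahedron,
    ← sign_mul_self]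
  ring_nf

theorem exists_pos_weights_of_mem_interior_convexHull {a b c d p : ℝ³}
    (h : AffineIndependent ℝ ![a, b, c, d]) (hp : p ∈ interior (convexHull ℝ {a, b, c, d})) :
    ∃ w : Fin 4 → ℝ, (∀ i, 0 < w i) ∧ w 0 + w 1 + w 2 + w 3 = 1 ∧
      p = w 0 • a + w 1 • b + w 2 • c + w 3 • d := by
  have hspan : affineSpan ℝ (Set.range ![a, b, c, d]) = ⊤ := by
    rw [h.affineSpan_eq_top_iff_card_eq_finrank_add_one]
    simp
  let T : AffineBasis (Fin 4) ℝ ℝ³ := ⟨![a, b, c, d], h, hspan⟩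
  have hT : Set.range T = {a, b, c, d} := by
    change Set.range ![a, b, c, d] = _
    simp only [Matrix.range_cons, Matrix.range_empty, Set.union_empty, Set.singleton_union]
  rw [← hT, T.interior_convexHull] at hp
  refine ⟨fun i => T.coord i p, hp, ?_, ?_⟩
  · simpa only [Fin.sum_univ_four] using T.sum_coord_apply_eq_one p
  · have := T.affineCombination_coord_eq_self p
    rw [Finset.univ.affineCombination_eq_linear_combination _ _ (T.sum_coord_apply_eq_one p),
      Fin.sum_univ_four] at this
    exact this.symm

theorem tetraDet_of_eq_affineCombination {a b c d p : ℝ³} {w : Fin 4 → ℝ}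
    (hw : w 0 + w 1 + w 2 + w 3 = 1) (hp : p = w 0 • a + w 1 • b + w 2 • c + w 3 • d) :
    tetraDet p b c d = w 0 * tetraDet a b c d ∧ tetraDet p a c d = -(w 1 * tetraDet a b c d) ∧
      tetraDet p a b d = w 2 * tetraDet a b c d ∧
      tetraDet p a b c = -(w 3 * tetraDet a b c d) := by
  have hw0 : w 0 = 1 - w 1 - w 2 - w 3 := by linarith
  have hpi : ∀ i, p i = a i + w 1 * (b i - a i) + w 2 * (c i - a i) + w 3 * (d i - a i) := by
    intro i
    simp only [hp, PiLp.add_apply, PiLp.smul_apply, smul_eq_mul, hw0]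
    ring
  refine ⟨?_, ?_, ?_, ?_⟩ <;>
  · simp only [tetraDet, det3_eq_coords, PiLp.sub_apply, hpi, hw0]
    ring

end

end CircumcenterOfMass

open CircumcenterOfMass

theorem circumcenter_of_mass_tetrahedron_subdivision_general
    (A B C D P : EuclideanSpace ℝ (Fin 3))
    (hP : P ∈ interior (convexHull ℝ {A, B, C, D}))
    (hABCD : AffineIndependent ℝ ![A, B, C, D])
    (O O₁ O₂ O₃ O₄ : EuclideanSpace ℝ (Fin 3))
    (hO : dist O A = dist O B ∧ dist O B = dist O C ∧ dist O C = dist O D)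
    (hO₁ : dist O₁ P = dist O₁ A ∧ dist O₁ A = dist O₁ B ∧ dist O₁ B = dist O₁ C)
    (hO₂ : dist O₂ P = dist O₂ A ∧ dist O₂ A = dist O₂ B ∧ dist O₂ B = dist O₂ D)
    (hO₃ : dist O₃ P = dist O₃ A ∧ dist O₃ A = dist O₃ C ∧ dist O₃ C = dist O₃ D)
    (hO₄ : dist O₄ P = dist O₄ B ∧ dist O₄ B = dist O₄ C ∧ dist O₄ C = dist O₄ D) :
    (volume (convexHull ℝ {P, A, B, C})).toReal • O₁ +
      (volume (convexHull ℝ {P, A, B, D})).toReal • O₂ +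
      (volume (convexHull ℝ {P, A, C, D})).toReal • O₃ +
      (volume (convexHull ℝ {P, B, C, D})).toReal • O₄ =
      (volume (convexHull ℝ {A, B, C, D})).toReal • O := by
  obtain ⟨w, hw, hsum, hPw⟩ := exists_pos_weights_of_mem_interior_convexHull hABCD hP
  obtain ⟨hPBCD, hPACD, hPABD, hPABC⟩ := tetraDet_of_eq_affineCombination hsum hPw
  rw [volume_smul_circumcenter hO₁, volume_smul_circumcenter hO₂, volume_smul_circumcenter hO₃,
    volume_smul_circumcenter hO₄, volume_smul_circumcenter hO, hPBCD, hPACD, hPABD, hPABC,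
    circumNumerator_cocycle P A B C D]
  simp only [Left.sign_neg, sign_mul, sign_pos (hw 0), sign_pos (hw 1), sign_pos (hw 2),
    sign_pos (hw 3), one_mul, SignType.coe_neg]
  module

/-- Subdividing a tetrahedron `ABCD` by an interior point `P` into `PABC`, `PABD`, `PACD`,
`PBCD`: the volume-weighted sum of circumcenters of the four small tetrahedra equals
`Vol(ABCD) • O(ABCD)` (IMC 2009, Problem 5). -/
theorem circumcenter_of_mass_tetrahedron_subdivision
    (A B C D P : EuclideanSpace ℝ (Fin 3))
    (hP : P ∈ interior (convexHull ℝ {A, B, C, D}))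
    (hABCD : AffineIndependent ℝ ![A, B, C, D])
    (h₁ : AffineIndependent ℝ ![P, A, B, C])
    (h₂ : AffineIndependent ℝ ![P, A, B, D])
    (h₃ : AffineIndependent ℝ ![P, A, C, D])
    (h₄ : AffineIndependent ℝ ![P, B, C, D])
    (O O₁ O₂ O₃ O₄ : EuclideanSpace ℝ (Fin 3))
    (hO : dist O A = dist O B ∧ dist O B = dist O C ∧ dist O C = dist O D)
    (hO₁ : dist O₁ P = dist O₁ A ∧ dist O₁ A = dist O₁ B ∧ dist O₁ B = dist O₁ C)
    (hO₂ : dist O₂ P = dist O₂ A ∧ dist O₂ A = dist O₂ B ∧ dist O₂ B = dist O₂ D)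
    (hO₃ : dist O₃ P = dist O₃ A ∧ dist O₃ A = dist O₃ C ∧ dist O₃ C = dist O₃ D)
    (hO₄ : dist O₄ P = dist O₄ B ∧ dist O₄ B = dist O₄ C ∧ dist O₄ C = dist O₄ D) :
    (volume (convexHull ℝ {P, A, B, C})).toReal • O₁ +
      (volume (convexHull ℝ {P, A, B, D})).toReal • O₂ +
      (volume (convexHull ℝ {P, A, C, D})).toReal • O₃ +
      (volume (convexHull ℝ {P, B, C, D})).toReal • O₄ =
      (volume (convexHull ℝ {A, B, C, D})).toReal • O :=
  circumcenter_of_mass_tetrahedron_subdivision_general A B C D P hP hABCD O O₁ O₂ O₃ O₄ hO hO₁ hO₂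
    hO₃ hO₄
end
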